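/- Let $\Omega \subset \mathbb{C}^n$ be a convex open set. For all $x, y \in \Omega$, $K_\Omega(x,y) \ge \frac{1}{2} \log\left(1 + \frac{|x-y|}{\min(\delta_\Omega(x, x-y),\ \delta_\Omega(y, x-y))}\right)$. -/

import Mathlib

open Metric Set MeasureTheory intervalIntegral

/-- The infinitesimal Kobayashi pseudometric of `Ω ⊆ ℂⁿ`. -/
noncomputable def kobMetric {n : ℕ} (Ω : Set (EuclideanSpace ℂ (Fin n)))
    (x v : EuclideanSpace ℂ (Fin n)) : ℝ :=
  sInf {r : ℝ | ∃ f : ℂ → EuclideanSpace ℂ (Fin n),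
    DifferentiableOn ℂ f (ball (0 : ℂ) 1) ∧ MapsTo f (ball (0 : ℂ) 1) Ω ∧ f 0 = x ∧
    ∃ ξ : ℂ, ξ • derivWithin f (ball (0 : ℂ) 1) 0 = v ∧ r = ‖ξ‖}

/-- The Kobayashi length of a curve `σ : [a,b] → Ω`. -/
noncomputable def kobLength {n : ℕ} (Ω : Set (EuclideanSpace ℂ (Fin n)))
    (σ : ℝ → EuclideanSpace ℂ (Fin n)) (a b : ℝ) : ℝ :=
  ∫ t in a..b, kobMetric Ω (σ t) (deriv σ t)

/-- The (integrated) Kobayashi pseudodistance on `Ω`, via lengths of curves joining the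
two points inside `Ω`. -/
noncomputable def kobDist {n : ℕ} (Ω : Set (EuclideanSpace ℂ (Fin n)))
    (x y : EuclideanSpace ℂ (Fin n)) : ℝ :=
  sInf {L : ℝ | ∃ σ : ℝ → EuclideanSpace ℂ (Fin n), ∃ a b : ℝ, a ≤ b ∧
    σ a = x ∧ σ b = y ∧ ContDiffOn ℝ 1 σ (Icc a b) ∧ MapsTo σ (Icc a b) Ω ∧
    L = kobLength Ω σ a b}

/-- Distance from `x` to the boundary of `Ω` within the complex line `x + ℂ v`. -/
noncomputable def deltaDir {n : ℕ} (Ω : Set (EuclideanSpace ℂ (Fin n)))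
    (x v : EuclideanSpace ℂ (Fin n)) : ℝ :=
  infDist x (frontier Ω ∩ {y | ∃ c : ℂ, y = x + c • v})

/-!
Let `p ∈ {x, y}` realise the minimum `δ` of `deltaDir Ω x (x - y)` and `deltaDir Ω y (x - y)`,
and let `a` be a boundary point of `Ω` on the complex line `p + ℂ (x - y)` with `‖a - p‖ = δ`.
A complex linear functional `ℓ` separates `a` from the convex set `Ω`, so `ℓ` maps `Ω` into the
half-plane `re w < c := re (ℓ a)`. By the Schwarz lemma for maps of the disc into a half-plane
(Borel–Carathéodory), the Kobayashi metric of `Ω` at `(z, v)` is at least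
`‖ℓ v‖ / (2 (c - re ℓ z))`. Hence the Kobayashi length of a curve from `x` to `y` dominates the
length of its image under `ℓ` in the metric `|dw| / (2 (c - re w))`, which is at least
`log (1 + ‖ℓ x - ℓ y‖ / (c - re ℓ p)) / 2`; and `‖ℓ x - ℓ y‖ / (c - re ℓ p) ≥ ‖x - y‖ / δ`
because `c - re ℓ p = re ℓ (a - p)`.
-/

open Filter Topology

theorem Complex.norm_deriv_zero_le_of_re_lt {g : ℂ → ℂ} {c : ℝ}
    (hg : DifferentiableOn ℂ g (ball 0 1)) (hre : ∀ z ∈ ball (0 : ℂ) 1, (g z).re < c) :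
    ‖deriv g 0‖ ≤ 2 * (c - (g 0).re) := by
  set M := c - (g 0).re
  have hM : 0 < M := sub_pos.2 (hre 0 (mem_ball_self one_pos))
  have hg' : HasDerivAt g (deriv g 0) 0 :=
    (hg.differentiableAt (ball_mem_nhds 0 one_pos)).hasDerivAt
  have hslope : Tendsto (fun z => ‖slope g 0 z‖) (𝓝[≠] 0) (𝓝 ‖deriv g 0‖) :=
    (hasDerivAt_iff_tendsto_slope.1 hg').norm
  have hbound : Tendsto (fun z : ℂ => 2 * M / (1 - ‖z‖)) (𝓝[≠] 0) (𝓝 (2 * M)) := by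
    have : ContinuousAt (fun z : ℂ => 2 * M / (1 - ‖z‖)) 0 := by
      fun_prop (disch := simp)
    simpa using this.tendsto.mono_left nhdsWithin_le_nhds
  refine le_of_tendsto_of_tendsto hslope hbound ?_
  filter_upwards [self_mem_nhdsWithin, nhdsWithin_le_nhds (ball_mem_nhds (0 : ℂ) one_pos)]
    with z hz0 hz
  have hz' : 0 < ‖z‖ := norm_pos_iff.2 hz0
  have hBC := Complex.borelCaratheodory_zero (f := fun w => g w - g 0) hM
    (hg.sub_const _) (fun w hw => by simpa [M] using (hre w hw).le) one_pos hz (by simp)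
  rw [slope_def_field, sub_zero, norm_div, div_le_iff₀ hz']
  calc ‖g z - g 0‖ ≤ 2 * M * ‖z‖ / (1 - ‖z‖) := hBC
    _ = 2 * M / (1 - ‖z‖) * ‖z‖ := by ring

/-- For `ε = 0` this is `log (1 + ‖w - w₀‖ / (c - re w)) / 2`, a lower bound for the distance from
`w₀` to `w` in the metric `|dw| / (2 (c - re w))` of the half-plane `re w < c`; `ε > 0` makes it
differentiable at `w₀`. -/
noncomputable def halfPlaneGauge (c : ℝ) (w₀ : ℂ) (ε : ℝ) (w : ℂ) : ℝ :=
  (Real.log (c - w.re + √(ε + ‖w - w₀‖ ^ 2)) - Real.log (c - w.re)) / 2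

section HalfPlaneGauge

variable {c ε : ℝ} {w₀ w : ℂ}

lemma half_log_one_add_le_halfPlaneGauge (hw : w.re < c) (hε : 0 ≤ ε) :
    Real.log (1 + ‖w - w₀‖ / (c - w.re)) / 2 ≤ halfPlaneGauge c w₀ ε w := by
  have hh : 0 < c - w.re := sub_pos.2 hw
  rw [halfPlaneGauge, ← Real.log_div (by positivity) hh.ne', one_add_div hh.ne']
  gcongr
  exact Real.le_sqrt_of_sq_le (by linarith)

lemma tendsto_halfPlaneGauge_self (hw₀ : w₀.re < c) :
    Tendsto (fun ε => halfPlaneGauge c w₀ ε w₀) (𝓝[>] 0) (𝓝 0) := by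
  have hh : c - w₀.re ≠ 0 := (sub_pos.2 hw₀).ne'
  have hcont : ContinuousAt (fun ε => halfPlaneGauge c w₀ ε w₀) 0 := by
    unfold halfPlaneGauge
    fun_prop (disch := simp [hh])
  simpa [halfPlaneGauge] using hcont.tendsto.mono_left nhdsWithin_le_nhds

lemma continuousOn_halfPlaneGauge :
    ContinuousOn (halfPlaneGauge c w₀ ε) {w | w.re < c} := by
  have hh : Continuous fun w : ℂ => c - w.re := by fun_prop
  refine ContinuousOn.div_const (ContinuousOn.sub ((hh.add (by fun_prop)).continuousOn.log
    fun w hw => ?_) (hh.continuousOn.log fun w hw => (sub_pos.2 hw).ne')) 2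
  exact (add_pos_of_pos_of_nonneg (sub_pos.2 hw) (Real.sqrt_nonneg _)).ne'

/-- `((h' + ρ') / (h + ρ) - h' / h) / 2` is the derivative of `(log (h + ρ) - log h) / 2`. -/
lemma abs_half_log_deriv_le {h ρ h' ρ' N : ℝ} (hh : 0 < h) (hρ : 0 ≤ ρ) (hh' : |h'| ≤ N)
    (hρ' : |ρ'| ≤ N) : |((h' + ρ') / (h + ρ) - h' / h) / 2| ≤ N / (2 * h) := by
  have hnum : |h * ρ' - h' * ρ| ≤ N * (h + ρ) := by
    calc |h * ρ' - h' * ρ| ≤ |h * ρ'| + |h' * ρ| := abs_sub _ _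
      _ = h * |ρ'| + |h'| * ρ := by rw [abs_mul, abs_mul, abs_of_pos hh, abs_of_nonneg hρ]
      _ ≤ h * N + N * ρ := by gcongr
      _ = N * (h + ρ) := by ring
  rw [show ((h' + ρ') / (h + ρ) - h' / h) / 2 = (h * ρ' - h' * ρ) / (2 * h * (h + ρ)) by
    field_simp; ring, abs_div, abs_of_pos (show 0 < 2 * h * (h + ρ) by positivity),
    div_le_div_iff₀ (by positivity) (by positivity)]
  nlinarith

lemma exists_hasDerivAt_halfPlaneGauge_comp {u : ℝ → ℂ} {u' : ℂ} {t : ℝ} (hε : 0 < ε)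
    (hu : HasDerivAt u u' t) (hre : (u t).re < c) :
    ∃ g', HasDerivAt (fun s => halfPlaneGauge c w₀ ε (u s)) g' t ∧
      |g'| ≤ ‖u'‖ / (2 * (c - (u t).re)) := by
  have hh : 0 < c - (u t).re := sub_pos.2 hre
  have hq : HasDerivAt (fun s => ε + ‖u s - w₀‖ ^ 2) (2 * inner ℝ (u t - w₀) u') t :=
    ((hu.sub_const w₀).norm_sq).const_add ε
  have hq0 : 0 < ε + ‖u t - w₀‖ ^ 2 := by positivity
  have hρ := hq.sqrt hq0.ne'
  have hhre : HasDerivAt (fun s => c - (u s).re) (-u'.re) t :=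
    (Complex.reCLM.hasFDerivAt.comp_hasDerivAt t hu).const_sub c
  have hpos : c - (u t).re + √(ε + ‖u t - w₀‖ ^ 2) ≠ 0 :=
    (add_pos_of_pos_of_nonneg hh (Real.sqrt_nonneg _)).ne'
  refine ⟨_, (((hhre.add hρ).log hpos).sub (hhre.log hh.ne')).div_const 2,
    abs_half_log_deriv_le hh (Real.sqrt_nonneg _) ?_ ?_⟩
  · rw [abs_neg]; exact Complex.abs_re_le_norm u'
  · have hnorm : ‖u t - w₀‖ ≤ √(ε + ‖u t - w₀‖ ^ 2) := Real.le_sqrt_of_sq_le (by linarith)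
    rw [abs_div, abs_mul, abs_two, abs_mul, abs_two, abs_of_nonneg (Real.sqrt_nonneg _),
      mul_div_mul_left _ _ two_ne_zero, div_le_iff₀ (Real.sqrt_pos.2 hq0)]
    calc |inner ℝ (u t - w₀) u'| ≤ ‖u t - w₀‖ * ‖u'‖ := abs_real_inner_le_norm _ _
      _ ≤ √(ε + ‖u t - w₀‖ ^ 2) * ‖u'‖ := by gcongr
      _ = ‖u'‖ * √(ε + ‖u t - w₀‖ ^ 2) := mul_comm _ _

end HalfPlaneGauge

lemma abs_halfPlaneGauge_comp_sub_le_integral {u u' : ℝ → ℂ} {F : ℝ → ℝ} {a b c ε : ℝ}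
    {w₀ : ℂ} (hε : 0 < ε) (hab : a ≤ b) (hu : ContinuousOn u (Icc a b))
    (hu' : ∀ t ∈ Ioo a b, HasDerivAt u (u' t) t) (hre : ∀ t ∈ Icc a b, (u t).re < c)
    (hF : ∀ t ∈ Ioo a b, ‖u' t‖ / (2 * (c - (u t).re)) ≤ F t) (hFi : IntegrableOn F (Icc a b)) :
    |halfPlaneGauge c w₀ ε (u b) - halfPlaneGauge c w₀ ε (u a)| ≤ ∫ t in a..b, F t := by
  have hderiv := fun t ht => exists_hasDerivAt_halfPlaneGauge_comp (w₀ := w₀) hε (hu' t ht)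
    (hre t (Ioo_subset_Icc_self ht))
  refine norm_sub_le_integral_of_norm_deriv_le_of_le hab
    (continuousOn_halfPlaneGauge.comp hu hre) (fun t ht => ?_)
    (Eventually.of_forall fun t ht => ?_)
    ((intervalIntegrable_iff_integrableOn_Icc_of_le hab).2 hFi)
  all_goals obtain ⟨g', hg', hg'le⟩ := hderiv t ht
  · exact hg'.differentiableAt.differentiableWithinAt
  · rw [show deriv (halfPlaneGauge c w₀ ε ∘ u) t = g' from hg'.deriv, Real.norm_eq_abs]
    exact hg'le.trans (hF t ht)

lemma half_log_le_integral_of_re_lt {u u' : ℝ → ℂ} {F : ℝ → ℝ} {a b c : ℝ} (hab : a ≤ b)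
    (hu : ContinuousOn u (Icc a b)) (hu' : ∀ t ∈ Ioo a b, HasDerivAt u (u' t) t)
    (hre : ∀ t ∈ Icc a b, (u t).re < c)
    (hF : ∀ t ∈ Ioo a b, ‖u' t‖ / (2 * (c - (u t).re)) ≤ F t) (hFi : IntegrableOn F (Icc a b)) :
    Real.log (1 + ‖u b - u a‖ / min (c - (u a).re) (c - (u b).re)) / 2 ≤ ∫ t in a..b, F t := by
  have hend : ∀ w ∈ ({u a, u b} : Set ℂ), ∀ w₀ ∈ ({u a, u b} : Set ℂ),
      Real.log (1 + ‖w - w₀‖ / (c - w.re)) / 2 ≤ ∫ t in a..b, F t := by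
    intro w hw w₀ hw₀
    have hre' : ∀ z ∈ ({u a, u b} : Set ℂ), z.re < c := by
      rintro _ (rfl | rfl)
      exacts [hre a (left_mem_Icc.2 hab), hre b (right_mem_Icc.2 hab)]
    have hlim := (tendsto_halfPlaneGauge_self (hre' w₀ hw₀)).add_const (∫ t in a..b, F t)
    rw [zero_add] at hlim
    refine ge_of_tendsto hlim (eventually_nhdsWithin_of_forall fun ε hε => ?_)
    rw [mem_Ioi] at hε
    have hswap : |halfPlaneGauge c w₀ ε w - halfPlaneGauge c w₀ ε w₀| ≤
        |halfPlaneGauge c w₀ ε (u b) - halfPlaneGauge c w₀ ε (u a)| := by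
      rcases hw with rfl | rfl <;> rcases hw₀ with rfl | rfl <;> simp [abs_sub_comm]
    calc Real.log (1 + ‖w - w₀‖ / (c - w.re)) / 2 ≤ halfPlaneGauge c w₀ ε w :=
          half_log_one_add_le_halfPlaneGauge (hre' w hw) hε.le
      _ ≤ halfPlaneGauge c w₀ ε w₀ + |halfPlaneGauge c w₀ ε w - halfPlaneGauge c w₀ ε w₀| := by
          linarith [le_abs_self (halfPlaneGauge c w₀ ε w - halfPlaneGauge c w₀ ε w₀)]
      _ ≤ halfPlaneGauge c w₀ ε w₀ + ∫ t in a..b, F t := by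
          linarith [abs_halfPlaneGauge_comp_sub_le_integral (w₀ := w₀) hε hab hu hu' hre hF hFi]
  rcases min_choice (c - (u a).re) (c - (u b).re) with h | h <;> rw [h]
  · simpa [norm_sub_rev] using hend (u a) (by simp) (u b) (by simp)
  · exact hend (u b) (by simp) (u a) (by simp)

theorem UpperSemicontinuousOn.aestronglyMeasurable {α : Type*} [TopologicalSpace α]
    [MeasurableSpace α] [OpensMeasurableSpace α] {μ : Measure α} {s : Set α} {f : α → ℝ}
    (hf : UpperSemicontinuousOn f s) (hs : MeasurableSet s) :
    AEStronglyMeasurable f (μ.restrict s) :=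
  ((aemeasurable_restrict_iff_comap_subtype hs).2
    (upperSemicontinuousOn_iff_restrict.2 hf).measurable.aemeasurable).aestronglyMeasurable

section Kobayashi

variable {n : ℕ} {Ω : Set (EuclideanSpace ℂ (Fin n))} {p v x y : EuclideanSpace ℂ (Fin n)}

local notation "E" => EuclideanSpace ℂ (Fin n)

lemma kobMetric_nonneg : 0 ≤ kobMetric Ω x v :=
  Real.sInf_nonneg fun _ ⟨_, _, _, _, _, _, hr⟩ => hr ▸ norm_nonneg _

lemma kobMetric_le_of_disc {f : ℂ → E} {ξ : ℂ} (hf : DifferentiableOn ℂ f (ball 0 1))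
    (hfΩ : MapsTo f (ball 0 1) Ω) (hf0 : f 0 = x) (hξ : ξ • deriv f 0 = v) :
    kobMetric Ω x v ≤ ‖ξ‖ := by
  refine csInf_le ⟨0, fun _ ⟨_, _, _, _, _, _, hr⟩ => hr ▸ norm_nonneg _⟩
    ⟨f, hf, hfΩ, hf0, ξ, ?_, rfl⟩
  rwa [derivWithin_of_isOpen isOpen_ball (mem_ball_self one_pos)]

lemma exists_disc_of_ball_subset {r : ℝ} (hr : 0 < r) (hΩ : ball x r ⊆ Ω) :
    ∃ f : ℂ → E, DifferentiableOn ℂ f (ball 0 1) ∧ MapsTo f (ball 0 1) Ω ∧ f 0 = x ∧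
      ((‖v‖ / r : ℝ) : ℂ) • deriv f 0 = v := by
  set w : E := ((r / ‖v‖ : ℝ) : ℂ) • v
  have hderiv : HasDerivAt (fun z : ℂ => x + z • w) w 0 := by
    simpa using ((hasDerivAt_id (0 : ℂ)).smul_const w).const_add x
  refine ⟨fun z => x + z • w, by fun_prop, fun z hz => hΩ ?_, by simp, ?_⟩
  · rcases eq_or_ne v 0 with rfl | hv
    · simpa [w] using hr
    have hw : ‖w‖ = r := by simp [w, norm_smul, abs_of_pos hr, hv]
    rw [mem_ball, dist_self_add_left, norm_smul, hw]
    simpa using mul_lt_mul_of_pos_right (mem_ball_zero_iff.1 hz) hr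
  · rcases eq_or_ne v 0 with rfl | hv
    · simp
    have hv' : 0 < ‖v‖ := norm_pos_iff.2 hv
    rw [hderiv.deriv, smul_smul, ← Complex.ofReal_mul, div_mul_div_comm, mul_comm ‖v‖ r,
      div_self (by positivity), Complex.ofReal_one, one_smul]

lemma kobMetric_le_of_ball_subset {r : ℝ} (hr : 0 < r) (hΩ : ball x r ⊆ Ω) :
    kobMetric Ω x v ≤ ‖v‖ / r := by
  obtain ⟨f, hf, hfΩ, hf0, hξ⟩ := exists_disc_of_ball_subset (v := v) hr hΩ
  simpa [abs_of_pos hr] using kobMetric_le_of_disc hf hfΩ hf0 hξ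

lemma le_kobMetric (hΩ : IsOpen Ω) (hx : x ∈ Ω) {r : ℝ}
    (h : ∀ (f : ℂ → E) (ξ : ℂ), DifferentiableOn ℂ f (ball 0 1) → MapsTo f (ball 0 1) Ω →
      f 0 = x → ξ • deriv f 0 = v → r ≤ ‖ξ‖) :
    r ≤ kobMetric Ω x v := by
  obtain ⟨ρ, hρ, hball⟩ := Metric.isOpen_iff.1 hΩ x hx
  obtain ⟨f, hf, hfΩ, hf0, hξ⟩ := exists_disc_of_ball_subset (v := v) hρ hball
  refine le_csInf ⟨_, f, hf, hfΩ, hf0, ((‖v‖ / ρ : ℝ) : ℂ), ?_, rfl⟩ ?_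
  · rwa [derivWithin_of_isOpen isOpen_ball (mem_ball_self one_pos)]
  rintro _ ⟨f, hf, hfΩ, hf0, ξ, hξ, rfl⟩
  rw [derivWithin_of_isOpen isOpen_ball (mem_ball_self one_pos)] at hξ
  exact h f ξ hf hfΩ hf0 hξ

/-- Schwarz lemma for `ℓ ∘ f`, which maps the disc into the half-plane `re w < c`. -/
lemma norm_div_le_kobMetric (ℓ : E →L[ℂ] ℂ) {c : ℝ} (hℓ : ∀ z ∈ Ω, (ℓ z).re < c)
    (hΩ : IsOpen Ω) (hx : x ∈ Ω) :
    ‖ℓ v‖ / (2 * (c - (ℓ x).re)) ≤ kobMetric Ω x v := by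
  refine le_kobMetric hΩ hx fun f ξ hf hfΩ hf0 hξ => ?_
  have hf' : HasDerivAt f (deriv f 0) 0 :=
    (hf.differentiableAt (ball_mem_nhds 0 one_pos)).hasDerivAt
  have hschwarz := Complex.norm_deriv_zero_le_of_re_lt (g := fun z => ℓ (f z))
    (ℓ.differentiable.comp_differentiableOn hf) fun z hz => hℓ _ (hfΩ hz)
  have hderiv : deriv (fun z => ℓ (f z)) 0 = ℓ (deriv f 0) :=
    (ℓ.hasFDerivAt.comp_hasDerivAt 0 hf').deriv
  rw [hderiv, hf0] at hschwarz
  have hpos : 0 < 2 * (c - (ℓ x).re) := by linarith [hℓ x hx]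
  rw [div_le_iff₀ hpos, ← hξ, map_smul, smul_eq_mul, norm_mul]
  gcongr

/-- For `v = 0` the constant disc at `x` works with any `ξ`. -/
lemma exists_disc_of_kobMetric_lt (hΩ : IsOpen Ω) (hx : x ∈ Ω) {y : ℝ}
    (hy : kobMetric Ω x v < y) :
    ∃ (f : ℂ → E) (ξ : ℂ), DifferentiableOn ℂ f (ball 0 1) ∧ MapsTo f (ball 0 1) Ω ∧
      f 0 = x ∧ ξ • deriv f 0 = v ∧ ξ ≠ 0 ∧ ‖ξ‖ < y := by
  by_contra! h
  have hy0 : 0 < y := kobMetric_nonneg.trans_lt hy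
  refine hy.not_ge (le_kobMetric hΩ hx fun f ξ hf hfΩ hf0 hξ => ?_)
  rcases eq_or_ne ξ 0 with rfl | hξ0
  · have hv : v = 0 := by simp [← hξ]
    have := h (fun _ => x) ((y / 2 : ℝ) : ℂ) (differentiableOn_const _) (fun _ _ => hx) rfl
      (by simp [hv]) (by simp [hy0.ne'])
    rw [Complex.norm_real, Real.norm_of_nonneg (by positivity)] at this
    linarith
  · exact h f ξ hf hfΩ hf0 hξ hξ0

lemma kobMetric_le_of_thickening_subset {f : ℂ → E} {d : ℝ}
    (hf : DifferentiableOn ℂ f (closedBall 0 1)) (hd : thickening d (f '' closedBall 0 1) ⊆ Ω)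
    {x' w : E} (hx' : dist x' (f 0) < d / 2) (hw : ‖w‖ < d / 2) (ξ : ℂ) :
    kobMetric Ω x' (ξ • (deriv f 0 + w)) ≤ ‖ξ‖ := by
  have hf0 : HasDerivAt f (deriv f 0) 0 :=
    (hf.differentiableAt (closedBall_mem_nhds 0 one_pos)).hasDerivAt
  have hderiv : HasDerivAt (fun z : ℂ => f z + ((x' - f 0) + z • w)) (deriv f 0 + w) 0 := by
    have := hf0.add (((hasDerivAt_id (0 : ℂ)).smul_const w).const_add (x' - f 0))
    rwa [one_smul] at this
  refine kobMetric_le_of_disc (f := fun z => f z + ((x' - f 0) + z • w)) ?_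
    (fun z hz => hd ?_) (by simp) (by rw [hderiv.deriv])
  · exact (hf.mono ball_subset_closedBall).add (by fun_prop)
  · refine mem_thickening_iff.2 ⟨f z, mem_image_of_mem f (ball_subset_closedBall hz), ?_⟩
    rw [dist_self_add_left]
    calc ‖(x' - f 0) + z • w‖ ≤ ‖x' - f 0‖ + ‖z‖ * ‖w‖ := by
          rw [← norm_smul]; exact norm_add_le _ _
      _ < d / 2 + 1 * (d / 2) := by
          rw [← dist_eq_norm]
          gcongr
          exact mem_ball_zero_iff.1 hz
      _ = d := by ring

/-- A near-extremal disc for `(x, v)`, shrunk to a smaller radius,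
stays inside `Ω` after a small affine perturbation, which adjusts its centre and derivative
to any nearby `(x', v')`. -/
lemma upperSemicontinuousAt_kobMetric (hΩ : IsOpen Ω) (hx : x ∈ Ω) :
    UpperSemicontinuousAt (fun p : E × E => kobMetric Ω p.1 p.2) (x, v) := by
  intro y hy
  obtain ⟨f, ξ, hf, hfΩ, hf0, hξ, hξ0, hξy⟩ := exists_disc_of_kobMetric_lt hΩ hx hy
  have hy0 : 0 < y := (norm_nonneg ξ).trans_lt hξy
  obtain ⟨ρ, hξρ, hρ1⟩ := exists_between ((div_lt_one hy0).2 hξy)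
  have hρ : 0 < ρ := (div_nonneg (norm_nonneg ξ) hy0.le).trans_lt hξρ
  have hscale : MapsTo (fun z : ℂ => (ρ : ℂ) * z) (closedBall 0 1) (ball 0 1) := fun z hz => by
    rw [mem_closedBall_zero_iff] at hz
    simpa [abs_of_pos hρ] using (mul_le_of_le_one_right hρ.le hz).trans_lt hρ1
  set fρ : ℂ → E := fun z => f (ρ * z)
  have hfρ : DifferentiableOn ℂ fρ (closedBall 0 1) := hf.comp (by fun_prop) hscale
  obtain ⟨d, hd, hdΩ⟩ := ((isCompact_closedBall (0 : ℂ) 1).image_of_continuousOn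
    hfρ.continuousOn).exists_thickening_subset_open hΩ (image_subset_iff.2 (hfΩ.comp hscale))
  have hderiv : deriv fρ 0 = (ρ : ℂ) • deriv f 0 := by
    have hf' : HasDerivAt f (deriv f 0) ((ρ : ℂ) * 0) := by
      rw [mul_zero]; exact (hf.differentiableAt (ball_mem_nhds 0 one_pos)).hasDerivAt
    have := hf'.scomp (0 : ℂ) ((hasDerivAt_id (0 : ℂ)).const_mul (ρ : ℂ))
    rw [mul_one] at this
    exact this.deriv
  have hnear : ∀ᶠ p in 𝓝 (x, v),
      dist p.1 x < d / 2 ∧ ‖((ρ : ℂ) / ξ) • (p.2 - v)‖ < d / 2 := by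
    refine (ContinuousAt.eventually_lt (by fun_prop) continuousAt_const ?_).and
      (ContinuousAt.eventually_lt (by fun_prop) continuousAt_const ?_) <;> simpa using hd
  filter_upwards [hnear] with p ⟨hp₁, hp₂⟩
  have hbound := kobMetric_le_of_thickening_subset hfρ hdΩ (by simpa [fρ, hf0] using hp₁) hp₂
    (ξ / ρ)
  have hρc : (ρ : ℂ) ≠ 0 := Complex.ofReal_ne_zero.2 hρ.ne'
  have hinv : ξ / ρ * (ρ / ξ) = 1 := by field_simp
  rw [hderiv, smul_add, smul_smul, smul_smul, div_mul_cancel₀ _ hρc, hinv, one_smul, hξ,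
    add_sub_cancel] at hbound
  calc kobMetric Ω p.1 p.2 ≤ ‖ξ / ρ‖ := hbound
    _ = ‖ξ‖ / ρ := by rw [norm_div, Complex.norm_real, Real.norm_of_nonneg hρ.le]
    _ < y := by rwa [div_lt_iff₀ hρ, mul_comm, ← div_lt_iff₀ hy0]

/-- The Kobayashi integrand of a `C¹` curve is integrable: it is upper semicontinuous on the
open interval, and bounded there by `‖σ'‖ / d` where the `d`-neighbourhood of the curve lies
in `Ω`. -/
lemma integrableOn_kobMetric_curve (hΩ : IsOpen Ω) {σ : ℝ → E} {a b : ℝ}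
    (hσ : ContDiffOn ℝ 1 σ (Icc a b)) (hσΩ : MapsTo σ (Icc a b) Ω) :
    IntegrableOn (fun t => kobMetric Ω (σ t) (deriv σ t)) (Icc a b) := by
  rw [integrableOn_Icc_iff_integrableOn_Ioo]
  rcases le_or_gt b a with hba | hab
  · simp [Ioo_eq_empty_of_le hba]
  have hderiv : ∀ t ∈ Ioo a b, deriv σ t = derivWithin σ (Icc a b) t := fun t ht =>
    (derivWithin_of_mem_nhds (Icc_mem_nhds ht.1 ht.2)).symm
  obtain ⟨C, hC⟩ := isCompact_Icc.exists_bound_of_continuousOn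
    (hσ.continuousOn_derivWithin (uniqueDiffOn_Icc hab) le_rfl)
  obtain ⟨d, hd, hdΩ⟩ := (isCompact_Icc.image_of_continuousOn
    hσ.continuousOn).exists_thickening_subset_open hΩ (image_subset_iff.2 hσΩ)
  have hcont : ContinuousOn (fun t => (σ t, deriv σ t)) (Ioo a b) :=
    (hσ.continuousOn.mono Ioo_subset_Icc_self).prodMk
      ((hσ.mono Ioo_subset_Icc_self).continuousOn_deriv_of_isOpen isOpen_Ioo le_rfl)
  have husc : UpperSemicontinuousOn (fun t => kobMetric Ω (σ t) (deriv σ t)) (Ioo a b) :=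
    fun t ht => (UpperSemicontinuousAt.comp (g := fun t => (σ t, deriv σ t))
      (upperSemicontinuousAt_kobMetric (v := deriv σ t) hΩ (hσΩ (Ioo_subset_Icc_self ht)))
      (hcont.continuousAt (Ioo_mem_nhds ht.1 ht.2))).upperSemicontinuousWithinAt _
  refine Integrable.mono' (integrableOn_const (C := C / d) measure_Ioo_lt_top.ne)
    (husc.aestronglyMeasurable measurableSet_Ioo) ((ae_restrict_iff' measurableSet_Ioo).2
    (Eventually.of_forall fun t ht => ?_))
  have hball : ball (σ t) d ⊆ Ω := fun z hz => hdΩ (mem_thickening_iff.2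
    ⟨σ t, mem_image_of_mem σ (Ioo_subset_Icc_self ht), hz⟩)
  rw [Real.norm_of_nonneg kobMetric_nonneg]
  calc kobMetric Ω (σ t) (deriv σ t) ≤ ‖deriv σ t‖ / d := kobMetric_le_of_ball_subset hd hball
    _ ≤ C / d := by
      rw [hderiv t ht]
      gcongr
      exact hC t (Ioo_subset_Icc_self ht)

lemma kobDist_nonneg : 0 ≤ kobDist Ω x y :=
  Real.sInf_nonneg fun _ ⟨_, _, _, hab, _, _, _, _, hL⟩ =>
    hL ▸ integral_nonneg hab fun _ _ => kobMetric_nonneg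

lemma half_log_le_kobLength (hΩ : IsOpen Ω) (ℓ : E →L[ℂ] ℂ) {c : ℝ}
    (hℓ : ∀ z ∈ Ω, (ℓ z).re < c) {σ : ℝ → E} {a b : ℝ} (hab : a ≤ b)
    (hσ : ContDiffOn ℝ 1 σ (Icc a b)) (hσΩ : MapsTo σ (Icc a b) Ω) :
    Real.log (1 + ‖ℓ (σ b) - ℓ (σ a)‖ / min (c - (ℓ (σ a)).re) (c - (ℓ (σ b)).re)) / 2 ≤
      kobLength Ω σ a b := by
  rw [kobLength]
  refine half_log_le_integral_of_re_lt (u := fun t => ℓ (σ t)) (u' := fun t => ℓ (deriv σ t))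
    hab (ℓ.continuous.comp_continuousOn hσ.continuousOn) (fun t ht => ?_)
    (fun t ht => hℓ _ (hσΩ ht)) (fun t ht => norm_div_le_kobMetric ℓ hℓ hΩ
      (hσΩ (Ioo_subset_Icc_self ht))) (integrableOn_kobMetric_curve hΩ hσ hσΩ)
  have hσt : HasDerivAt σ (deriv σ t) t :=
    ((hσ.differentiableOn one_ne_zero t (Ioo_subset_Icc_self ht)).differentiableAt
      (Icc_mem_nhds ht.1 ht.2)).hasDerivAt
  exact (ℓ.restrictScalars ℝ).hasFDerivAt.comp_hasDerivAt t hσt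

lemma half_log_le_kobDist (hconv : Convex ℝ Ω) (hΩ : IsOpen Ω) (hx : x ∈ Ω) (hy : y ∈ Ω)
    (ℓ : E →L[ℂ] ℂ) {c : ℝ} (hℓ : ∀ z ∈ Ω, (ℓ z).re < c) :
    Real.log (1 + ‖ℓ y - ℓ x‖ / min (c - (ℓ x).re) (c - (ℓ y).re)) / 2 ≤ kobDist Ω x y := by
  refine le_csInf ⟨_, fun t : ℝ => x + t • (y - x), 0, 1, zero_le_one, by simp, by simp,
    by fun_prop, fun t ht => hconv.add_smul_sub_mem hx hy ht, rfl⟩ ?_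
  rintro _ ⟨σ, a, b, hab, rfl, rfl, hσ, hσΩ, rfl⟩
  exact half_log_le_kobLength hΩ ℓ hℓ hab hσ hσΩ

lemma deltaDir_nonneg : 0 ≤ deltaDir Ω p v := infDist_nonneg

lemma exists_add_smul_mem_frontier_of_deltaDir_ne_zero (h : deltaDir Ω p v ≠ 0) :
    ∃ c₀ : ℂ, p + c₀ • v ∈ frontier Ω ∧ ‖c₀‖ * ‖v‖ = deltaDir Ω p v := by
  set S := frontier Ω ∩ {y | ∃ c : ℂ, y = p + c • v}
  have hS : S.Nonempty := nonempty_iff_ne_empty.2 fun hS => h (by simp [deltaDir, S, hS])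
  have hline : {y | ∃ c : ℂ, y = p + c • v} = (· - p) ⁻¹' (Submodule.span ℂ {v}) := by
    ext y
    simp only [mem_ofPred_eq, mem_preimage, SetLike.mem_coe, Submodule.mem_span_singleton]
    exact exists_congr fun c =>
      ⟨fun h => by rw [h, add_sub_cancel_left], fun h => by rw [h, add_sub_cancel]⟩
  have hSc : IsClosed S := isClosed_frontier.inter (hline ▸
    (Submodule.closed_of_finiteDimensional _).preimage (continuous_sub_right p))
  obtain ⟨_, ⟨hmem, c₀, rfl⟩, hdist⟩ := hSc.exists_infDist_eq_dist hS p
  refine ⟨c₀, hmem, ?_⟩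
  rw [deltaDir, hdist, dist_self_add_right, norm_smul]

lemma exists_re_lt_of_deltaDir_pos (hconv : Convex ℝ Ω) (hΩ : IsOpen Ω) (hp : p ∈ Ω)
    (h : 0 < deltaDir Ω p v) :
    ∃ (ℓ : E →L[ℂ] ℂ) (c : ℝ), (∀ z ∈ Ω, (ℓ z).re < c) ∧
      ‖v‖ / deltaDir Ω p v ≤ ‖ℓ v‖ / (c - (ℓ p).re) := by
  obtain ⟨c₀, hmem, hδ⟩ := exists_add_smul_mem_frontier_of_deltaDir_ne_zero h.ne'
  rw [hΩ.frontier_eq] at hmem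
  obtain ⟨ℓ, hℓ⟩ := RCLike.geometric_hahn_banach_open_point (𝕜 := ℂ) hconv hΩ hmem.2
  refine ⟨ℓ, (ℓ (p + c₀ • v)).re, hℓ, ?_⟩
  have hre : (ℓ (p + c₀ • v)).re - (ℓ p).re ≤ ‖c₀‖ * ‖ℓ v‖ := by
    rw [map_add, Complex.add_re, add_sub_cancel_left, map_smul, smul_eq_mul, ← norm_mul]
    exact Complex.re_le_norm _
  have hpos : 0 < (ℓ (p + c₀ • v)).re - (ℓ p).re := sub_pos.2 (hℓ p hp)
  rw [div_le_div_iff₀ h hpos, ← hδ]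
  nlinarith [norm_nonneg v]

end Kobayashi

/-- the Nikolov–Pflug–Thomas lower bound for the Kobayashi distance on a
convex domain. -/
theorem stmt_10 {n : ℕ} (Ω : Set (EuclideanSpace ℂ (Fin n)))
    (hconv : Convex ℝ Ω) (hopen : IsOpen Ω)
    (x y : EuclideanSpace ℂ (Fin n)) (hx : x ∈ Ω) (hy : y ∈ Ω) :
    (1 / 2) * Real.log (1 + dist x y /
        min (deltaDir Ω x (x - y)) (deltaDir Ω y (x - y))) ≤
      kobDist Ω x y := by
  obtain ⟨p, hp, hpδ⟩ : ∃ p ∈ ({x, y} : Set _),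
      deltaDir Ω p (x - y) = min (deltaDir Ω x (x - y)) (deltaDir Ω y (x - y)) := by
    rcases min_choice (deltaDir Ω x (x - y)) (deltaDir Ω y (x - y)) with h | h
    exacts [⟨x, by simp, h.symm⟩, ⟨y, by simp, h.symm⟩]
  rw [← hpδ]
  rcases (deltaDir_nonneg (Ω := Ω) (p := p) (v := x - y)).eq_or_lt with hδ | hδ
  · rw [← hδ, div_zero, add_zero, Real.log_one, mul_zero]
    exact kobDist_nonneg
  have hpΩ : p ∈ Ω := by rcases hp with rfl | rfl <;> assumption
  obtain ⟨ℓ, c, hℓ, hsep⟩ := exists_re_lt_of_deltaDir_pos hconv hopen hpΩ hδ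
  have hmin : min (c - (ℓ x).re) (c - (ℓ y).re) ≤ c - (ℓ p).re := by
    rcases hp with rfl | rfl <;> simp
  calc 1 / 2 * Real.log (1 + dist x y / deltaDir Ω p (x - y))
      ≤ 1 / 2 * Real.log (1 + ‖ℓ (x - y)‖ / min (c - (ℓ x).re) (c - (ℓ y).re)) := by
        rw [dist_eq_norm]
        gcongr 1 / 2 * Real.log (1 + ?_)
        exact hsep.trans (div_le_div_of_nonneg_left (norm_nonneg _)
          (lt_min (sub_pos.2 (hℓ x hx)) (sub_pos.2 (hℓ y hy))) hmin)
    _ ≤ kobDist Ω x y := by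
        rw [one_div_mul_eq_div, map_sub, norm_sub_rev]
        exact half_log_le_kobDist hconv hopen hx hy ℓ hℓ
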